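/- arXiv:1403.0114 — 2 statements merged into one kernel-verified Lean document; each statement's English description precedes it below -/
import Mathlib

section
/- For every bounded open set Ω ⊂ ℝ^d, λ₁(Ω)·T(Ω) ≤ |Ω|, where λ₁(Ω) is the first Dirichlet eigenvalue of the Laplacian on Ω, T(Ω) is the torsional rigidity, and |Ω| is the Lebesgue measure. -/
open MeasureTheory Metric Set

/-- The first Dirichlet eigenvalue of the Laplacian on `Ω`, defined variationally as the
infimum of the Rayleigh quotient over nonzero `C¹` functions compactly supported in `Ω`. -/
noncomputable def dirichletEigenvalue1 {E : Type*} [NormedAddCommGroup E] [NormedSpace ℝ E]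
    [MeasureSpace E] (Ω : Set E) : ℝ :=
  sInf {r : ℝ | ∃ u : E → ℝ, ContDiff ℝ 1 u ∧ HasCompactSupport u ∧ tsupport u ⊆ Ω ∧
    (∫ x, (u x) ^ 2) ≠ 0 ∧ r = (∫ x, ‖fderiv ℝ u x‖ ^ 2) / (∫ x, (u x) ^ 2)}

/-- The torsional rigidity of `Ω`: `T(Ω) = -2 E₁(Ω)` where `E₁(Ω)` is the Dirichlet
energy `inf { ∫ (|∇u|²/2 - u) : u ∈ H¹₀(Ω) }`, here realized via `C¹` functions
compactly supported in `Ω`. -/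
noncomputable def torsionalRigidity {E : Type*} [NormedAddCommGroup E] [NormedSpace ℝ E]
    [MeasureSpace E] (Ω : Set E) : ℝ :=
  -2 * sInf {r : ℝ | ∃ u : E → ℝ, ContDiff ℝ 1 u ∧ HasCompactSupport u ∧ tsupport u ⊆ Ω ∧
    r = ∫ x, (‖fderiv ℝ u x‖ ^ 2 / 2 - u x)}

/-! Testing the Rayleigh quotient with an admissible `u` gives `λ₁ ∫ u² ≤ ∫ |∇u|²`, and
Cauchy–Schwarz on `Ω` gives `(∫ u)² ≤ |Ω| ∫ u²`. Hence the energy `∫ (|∇u|²/2 - u)` is at least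
`λ₁ C / 2 - √(|Ω| C) ≥ -|Ω| / (2 λ₁)` with `C = ∫ u²` (AM–GM), so `T(Ω) ≤ |Ω| / λ₁`. -/

section CauchySchwarz

variable {α : Type*} [MeasurableSpace α] {μ : Measure α} {f : α → ℝ}

theorem sq_integral_le_measureReal_univ_mul_integral_sq [IsFiniteMeasure μ] (hf : MemLp f 2 μ) :
    (∫ x, f x ∂μ) ^ 2 ≤ μ.real univ * ∫ x, f x ^ 2 ∂μ := by
  rcases eq_zero_or_neZero μ with rfl | _
  · simp
  have jensen : (⨍ x, f x ∂μ) ^ 2 ≤ ⨍ x, f x ^ 2 ∂μ :=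
    (even_two.convexOn_pow (𝕜 := ℝ)).map_average_le (continuous_pow 2).continuousOn isClosed_univ
      (.of_forall fun _ ↦ mem_univ _) (hf.integrable one_le_two) hf.integrable_sq
  have hμ : 0 < μ.real univ := measureReal_univ_pos
  rw [average_eq, average_eq, smul_eq_mul, smul_eq_mul] at jensen
  field_simp at jensen
  linarith

theorem sq_integral_le_measureReal_mul_integral_sq {s : Set α} (hs : μ s ≠ ⊤) (hf : MemLp f 2 μ)
    (hfs : ∀ x ∉ s, f x = 0) : (∫ x, f x ∂μ) ^ 2 ≤ μ.real s * ∫ x, f x ^ 2 ∂μ := by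
  have := isFiniteMeasure_restrict.2 hs
  have h := sq_integral_le_measureReal_univ_mul_integral_sq (hf.restrict s)
  rwa [measureReal_restrict_apply_univ, setIntegral_eq_integral_of_forall_compl_eq_zero hfs,
    setIntegral_eq_integral_of_forall_compl_eq_zero fun x hx ↦ by simp [hfs x hx]] at h

end CauchySchwarz

theorem neg_div_le_half_sub_of_sq_le {l A B C V : ℝ} (hl : 0 < l) (hV : 0 ≤ V) (hC : 0 ≤ C)
    (hA : l * C ≤ A) (hB : B ^ 2 ≤ V * C) : -(V / (2 * l)) ≤ A / 2 - B := by
  have amgm : 2 * (l * B) ≤ l ^ 2 * C + V :=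
    two_mul_le_add_of_sq_le_mul (by positivity) hV (by nlinarith [sq_nonneg l])
  rw [neg_le, le_div_iff₀ (by positivity)]
  nlinarith [mul_le_mul_of_nonneg_left hA hl.le]

section Variational

variable {E : Type*} [NormedAddCommGroup E] [NormedSpace ℝ E] [MeasureSpace E] {Ω : Set E}

theorem integral_norm_fderiv_sq_div_integral_sq_nonneg (u : E → ℝ) :
    0 ≤ (∫ x, ‖fderiv ℝ u x‖ ^ 2) / ∫ x, u x ^ 2 :=
  div_nonneg (integral_nonneg fun _ ↦ by positivity) (integral_nonneg fun _ ↦ sq_nonneg _)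

theorem dirichletEigenvalue1_nonneg (Ω : Set E) : 0 ≤ dirichletEigenvalue1 Ω :=
  Real.sInf_nonneg <| by
    rintro _ ⟨u, -, -, -, -, rfl⟩
    exact integral_norm_fderiv_sq_div_integral_sq_nonneg u

theorem dirichletEigenvalue1_mul_integral_sq_le {u : E → ℝ} (hu : ContDiff ℝ 1 u)
    (hcs : HasCompactSupport u) (huΩ : tsupport u ⊆ Ω) :
    dirichletEigenvalue1 Ω * ∫ x, u x ^ 2 ≤ ∫ x, ‖fderiv ℝ u x‖ ^ 2 := by
  have hC : 0 ≤ ∫ x, u x ^ 2 := integral_nonneg fun _ ↦ sq_nonneg _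
  rcases hC.eq_or_lt with hC0 | hCpos
  · rw [← hC0, mul_zero]
    exact integral_nonneg fun _ ↦ by positivity
  rw [← le_div_iff₀ hCpos]
  refine csInf_le ⟨0, ?_⟩ ⟨u, hu, hcs, huΩ, hCpos.ne', rfl⟩
  rintro _ ⟨v, -, -, -, -, rfl⟩
  exact integral_norm_fderiv_sq_div_integral_sq_nonneg v

theorem torsionalRigidity_le {c : ℝ} (h : ∀ u : E → ℝ, ContDiff ℝ 1 u → HasCompactSupport u →
    tsupport u ⊆ Ω → -c ≤ ∫ x, (‖fderiv ℝ u x‖ ^ 2 / 2 - u x)) :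
    torsionalRigidity Ω ≤ 2 * c := by
  have hInf : -c ≤ sInf {r : ℝ | ∃ u : E → ℝ, ContDiff ℝ 1 u ∧ HasCompactSupport u ∧
      tsupport u ⊆ Ω ∧ r = ∫ x, (‖fderiv ℝ u x‖ ^ 2 / 2 - u x)} := by
    refine le_csInf ⟨_, 0, contDiff_const, HasCompactSupport.zero, by simp, rfl⟩ ?_
    rintro _ ⟨u, hu, hcs, huΩ, rfl⟩
    exact h u hu hcs huΩ
  rw [torsionalRigidity]
  linarith

variable [OpensMeasurableSpace E] [IsFiniteMeasureOnCompacts (volume : Measure E)]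

theorem neg_div_le_integral_energy (hl : 0 < dirichletEigenvalue1 Ω) (hΩ : volume Ω ≠ ⊤)
    {u : E → ℝ} (hu : ContDiff ℝ 1 u) (hcs : HasCompactSupport u) (huΩ : tsupport u ⊆ Ω) :
    -((volume Ω).toReal / (2 * dirichletEigenvalue1 Ω)) ≤
      ∫ x, (‖fderiv ℝ u x‖ ^ 2 / 2 - u x) := by
  have hgrad : Integrable fun x ↦ ‖fderiv ℝ u x‖ ^ 2 :=
    Continuous.integrable_of_hasCompactSupport ((hu.continuous_fderiv one_ne_zero).norm.pow 2)
      ((hcs.fderiv ℝ).norm.comp_left (g := fun t : ℝ ↦ t ^ 2) (by simp))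
  have cauchy_schwarz : (∫ x, u x) ^ 2 ≤ (volume Ω).toReal * ∫ x, u x ^ 2 :=
    sq_integral_le_measureReal_mul_integral_sq hΩ
      (hu.continuous.memLp_of_hasCompactSupport hcs)
      fun x hx ↦ image_eq_zero_of_notMem_tsupport fun h ↦ hx (huΩ h)
  rw [integral_sub (hgrad.div_const 2) (hu.continuous.integrable_of_hasCompactSupport hcs),
    integral_div]
  exact neg_div_le_half_sub_of_sq_le hl ENNReal.toReal_nonneg
    (integral_nonneg fun _ ↦ sq_nonneg _) (dirichletEigenvalue1_mul_integral_sq_le hu hcs huΩ)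
    cauchy_schwarz

end Variational

theorem lambda1_mul_torsion_le_volume_general (d : ℕ) (Ω : Set (EuclideanSpace ℝ (Fin d)))
    (hb : Bornology.IsBounded Ω) :
    dirichletEigenvalue1 Ω * torsionalRigidity Ω ≤ (volume Ω).toReal := by
  rcases (dirichletEigenvalue1_nonneg Ω).eq_or_lt with hl | hl
  · rw [← hl, zero_mul]
    exact ENNReal.toReal_nonneg
  have hT : torsionalRigidity Ω ≤ 2 * ((volume Ω).toReal / (2 * dirichletEigenvalue1 Ω)) :=
    torsionalRigidity_le fun _ hu hcs huΩ ↦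
      neg_div_le_integral_energy hl hb.measure_lt_top.ne hu hcs huΩ
  calc dirichletEigenvalue1 Ω * torsionalRigidity Ω
      ≤ dirichletEigenvalue1 Ω * (2 * ((volume Ω).toReal / (2 * dirichletEigenvalue1 Ω))) :=
        mul_le_mul_of_nonneg_left hT hl.le
    _ = (volume Ω).toReal := by field_simp

/-- For every bounded open set `Ω ⊂ ℝ^d`, `λ₁(Ω) · T(Ω) ≤ |Ω|`. -/
theorem lambda1_mul_torsion_le_volume (d : ℕ) (Ω : Set (EuclideanSpace ℝ (Fin d)))
    (hΩ : IsOpen Ω) (hb : Bornology.IsBounded Ω) :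
    dirichletEigenvalue1 Ω * torsionalRigidity Ω ≤ (volume Ω).toReal :=
  lambda1_mul_torsion_le_volume_general d Ω hb
end

section
/- For the test function u(x,y) = ((a² - 4y²)/8)·θ(x) on the rectangle R_{a,b} = (-b/2,b/2)×(-a/2,a/2) with 0 < a ≤ b, where θ(x) = 1 for |x| ≤ (b-a)/2 and θ(x) = (b - 2|x|)/a for (b-a)/2 < |x| < b/2, one has ∫ (|∇u|²/2 - u) dx dy = -a³b/24 + 11a⁴/360. -/
open MeasureTheory Metric Set
open scoped Interval

/-!
For fixed `x` the integrand is a polynomial in `y` whose coefficients are quadratic in `θ(x)` and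
`θ'(x)²`, so the inner integral is `θ'² a⁵/240 + θ² a³/24 - θ a³/12`. This is an even function
of `x`: on the plateau `|x| ≤ (b-a)/2` it equals `-a³/24`, and on the ramp the substitution
`t = θ(x)` turns its integral into `(a/2) ∫₀¹ (a³/60 + t² a³/24 - t a³/12) dt = -a⁴/180`.
Hence the energy is `2 ((b-a)/2 · (-a³/24) - a⁴/180) = -a³b/24 + 11a⁴/360`.
-/

section Piecewise

variable {α : Type*} {P Q : ℝ → α} {a b c : ℝ}

theorem eqOn_ite_le_left (hac : a ≤ c) :
    EqOn (fun x => if x ≤ c then P x else Q x) P (Ι a c) := fun x hx => by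
  rw [uIoc_of_le hac] at hx
  simp [hx.2]

theorem eqOn_ite_le_right (hcb : c ≤ b) :
    EqOn (fun x => if x ≤ c then P x else Q x) Q (Ι c b) := fun x hx => by
  rw [uIoc_of_le hcb] at hx
  simp [hx.1]

end Piecewise

section IntervalIntegral

variable {E : Type*} [NormedAddCommGroup E] {P Q : ℝ → E} {a b c : ℝ}

theorem intervalIntegrable_ite_le (hac : a ≤ c) (hcb : c ≤ b)
    (hP : IntervalIntegrable P volume a c) (hQ : IntervalIntegrable Q volume c b) :
    IntervalIntegrable (fun x => if x ≤ c then P x else Q x) volume a b :=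
  (hP.congr (eqOn_ite_le_left hac).symm).trans (hQ.congr (eqOn_ite_le_right hcb).symm)

variable [NormedSpace ℝ E]

theorem integral_ite_le (hac : a ≤ c) (hcb : c ≤ b)
    (hP : IntervalIntegrable P volume a c) (hQ : IntervalIntegrable Q volume c b) :
    ∫ x in a..b, (if x ≤ c then P x else Q x) = (∫ x in a..c, P x) + ∫ x in c..b, Q x := by
  rw [← intervalIntegral.integral_add_adjacent_intervals
      (hP.congr (eqOn_ite_le_left hac).symm) (hQ.congr (eqOn_ite_le_right hcb).symm),
    intervalIntegral.integral_congr_ae (ae_of_all _ (eqOn_ite_le_left hac)),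
    intervalIntegral.integral_congr_ae (ae_of_all _ (eqOn_ite_le_right hcb))]

theorem intervalIntegral.integral_comp_abs_of_nonneg {f : ℝ → E} {r : ℝ} (hr : 0 ≤ r)
    (hf : IntervalIntegrable f volume 0 r) :
    ∫ x in -r..r, f |x| = (2 : ℝ) • ∫ x in 0..r, f x := by
  have hpos : ∫ x in 0..r, f |x| = ∫ x in 0..r, f x :=
    intervalIntegral.integral_congr fun x hx => by
      rw [uIcc_of_le hr] at hx
      rw [abs_of_nonneg hx.1]
  have hf_abs : IntervalIntegrable (fun x => f |x|) volume 0 r :=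
    hf.congr fun x hx => by
      rw [uIoc_of_le hr] at hx
      rw [abs_of_pos hx.1]
  have hneg : ∫ x in -r..0, f |x| = ∫ x in 0..r, f |x| := by
    simpa using (intervalIntegral.integral_comp_neg (a := 0) (b := r) fun x => f |x|).symm
  rw [← intervalIntegral.integral_add_adjacent_intervals (b := 0) _ hf_abs, hneg, hpos, two_smul]
  simpa using ((IntervalIntegrable.iff_comp_neg).mp hf_abs).symm

theorem integral_comp_ramp (f : ℝ → E) (ha : a ≠ 0) (b : ℝ) :
    ∫ x in (b - a) / 2..b / 2, f ((b - 2 * x) / a) = (a / 2) • ∫ t in 0..1, f t := by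
  have h_affine : ∀ x, (b - 2 * x) / a = b / a - 2 / a * x := fun x => by ring
  simp only [h_affine]
  rw [intervalIntegral.integral_comp_sub_mul f (by simpa using ha)]
  congr 2 <;> field_simp <;> ring

end IntervalIntegral

theorem integral_cross_section_energy (a A T : ℝ) :
    ∫ y in -(a / 2)..a / 2,
        ((((a ^ 2 - 4 * y ^ 2) / 8) ^ 2 * A + y ^ 2 * T ^ 2) / 2 - ((a ^ 2 - 4 * y ^ 2) / 8) * T) =
      A * a ^ 5 / 240 + T ^ 2 * a ^ 3 / 24 - T * a ^ 3 / 12 := by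
  have h_expand : ∀ y : ℝ,
      ((((a ^ 2 - 4 * y ^ 2) / 8) ^ 2 * A + y ^ 2 * T ^ 2) / 2 - ((a ^ 2 - 4 * y ^ 2) / 8) * T) =
        (A * a ^ 4 / 128 - a ^ 2 * T / 8) + (T ^ 2 / 2 + T / 2 - A * a ^ 2 / 16) * y ^ 2 +
          A / 8 * y ^ 4 :=
    fun y => by ring
  simp (disch := (apply Continuous.intervalIntegrable; fun_prop)) only [h_expand,
    intervalIntegral.integral_add, intervalIntegral.integral_const_mul, integral_pow,
    intervalIntegral.integral_const]
  simp only [sub_neg_eq_add, add_halves, smul_eq_mul, Nat.reduceAdd, Nat.cast_ofNat]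
  ring

/-- For the test function `u(x,y) = ((a² - 4y²)/8)·θ(x)` on the rectangle
`R_{a,b} = (-b/2,b/2)×(-a/2,a/2)` with `0 < a ≤ b`, where `θ(x) = 1` for `|x| ≤ (b-a)/2`
and `θ(x) = (b - 2|x|)/a` otherwise, one has
`∫∫ (|∇u|²/2 - u) dx dy = -a³b/24 + 11a⁴/360`.
Here `|∇u|² = ((a²-4y²)/8)² θ'(x)² + y² θ(x)²`, with `θ'(x)² = 4/a²` off the plateau. -/
theorem energy_of_rectangle_test_function (a b : ℝ) (ha : 0 < a) (hab : a ≤ b) :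
    (∫ x in Ioo (-(b / 2)) (b / 2), ∫ y in Ioo (-(a / 2)) (a / 2),
        ((((a ^ 2 - 4 * y ^ 2) / 8) ^ 2 *
            (if |x| ≤ (b - a) / 2 then (0 : ℝ) else 4 / a ^ 2) +
          y ^ 2 * (if |x| ≤ (b - a) / 2 then (1 : ℝ) else (b - 2 * |x|) / a) ^ 2) / 2 -
          ((a ^ 2 - 4 * y ^ 2) / 8) *
            (if |x| ≤ (b - a) / 2 then (1 : ℝ) else (b - 2 * |x|) / a))) =
      -(a ^ 3 * b) / 24 + 11 * a ^ 4 / 360 := by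
  set F : ℝ → ℝ := fun t => a ^ 3 / 60 + t ^ 2 * a ^ 3 / 24 - t * a ^ 3 / 12 with hF
  set f : ℝ → ℝ := fun s => if s ≤ (b - a) / 2 then -(a ^ 3 / 24) else F ((b - 2 * s) / a)
    with hf
  have hc0 : 0 ≤ (b - a) / 2 := by linarith
  have hcb : (b - a) / 2 ≤ b / 2 := by linarith
  have h_plateau : IntervalIntegrable (fun _ => -(a ^ 3 / 24)) volume 0 ((b - a) / 2) :=
    intervalIntegrable_const
  have h_ramp : IntervalIntegrable (fun x => F ((b - 2 * x) / a)) volume ((b - a) / 2) (b / 2) :=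
    Continuous.intervalIntegrable (by fun_prop) _ _
  have h_unit : ∫ t in (0 : ℝ)..1, F t = -(a ^ 3 / 90) := by
    simp (disch := (apply Continuous.intervalIntegrable; fun_prop)) only [hF,
      intervalIntegral.integral_sub, intervalIntegral.integral_add, intervalIntegral.integral_div,
      intervalIntegral.integral_mul_const, intervalIntegral.integral_const, integral_pow,
      integral_id, smul_eq_mul]
    ring
  calc _ = ∫ x in -(b / 2)..b / 2, f |x| := by
        rw [intervalIntegral.integral_of_le (by linarith), integral_Ioc_eq_integral_Ioo]
        refine setIntegral_congr_fun measurableSet_Ioo fun x _ => ?_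
        rw [← integral_Ioc_eq_integral_Ioo, ← intervalIntegral.integral_of_le (by linarith),
          integral_cross_section_energy]
        simp only [hf, hF]
        split_ifs <;> field_simp <;> ring
    _ = _ := by
        rw [intervalIntegral.integral_comp_abs_of_nonneg (by linarith)
            (intervalIntegrable_ite_le hc0 hcb h_plateau h_ramp),
          integral_ite_le hc0 hcb h_plateau h_ramp, intervalIntegral.integral_const,
          integral_comp_ramp _ ha.ne', h_unit]
        simp only [smul_eq_mul]
        ring
end
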